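/- Let V be a finite-dimensional complex inner product space and β a self-adjoint endomorphism of V with distinct eigenvalues λ₁ > λ₂ > ⋯ > λ_k, eigenspaces V₁, …, V_k and orthogonal projections P_i : V → V onto V_i. Let v ∈ V be nonzero and let j be the smallest index with P_j v ≠ 0. Then in the projective space ℙ(V) one has lim_{t → +∞} [exp(tβ)v] = [P_j v]. In particular, if P₁v ≠ 0 then the flow carries [v] to [P₁v] ∈ ℙ(V₁). -/

import Mathlib

open scoped LinearAlgebra.Projectivization

noncomputable instance stmt11.instTop (V : Type*) [NormedAddCommGroup V]
    [InnerProductSpace ℂ V] : TopologicalSpace (ℙ ℂ V) :=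
  instTopologicalSpaceQuotient

lemma stmt11.exp_apply_ne_zero {V : Type*} [NormedAddCommGroup V] [InnerProductSpace ℂ V]
    [FiniteDimensional ℂ V] (A : V →L[ℂ] V) (v : V) (hv : v ≠ 0) :
    NormedSpace.exp A v ≠ 0 := by
  intro h
  letI : NormedAlgebra ℚ (V →L[ℂ] V) := NormedAlgebra.restrictScalars ℚ ℂ (V →L[ℂ] V)
  have h1 : NormedSpace.exp (-A) * NormedSpace.exp A = 1 := by
    rw [← NormedSpace.exp_add_of_commute (Commute.neg_left (Commute.refl A)),
      neg_add_cancel, NormedSpace.exp_zero]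
  have h2 : NormedSpace.exp (-A) (NormedSpace.exp A v) = v := by
    have := congrArg (fun f : V →L[ℂ] V => f v) h1
    simpa using this
  rw [h] at h2
  simp at h2
  exact hv h2.symm

/-! Decomposing `v = ∑ P_i v` into eigenvectors gives `exp(tβ)v = ∑ e^{tλ_i} P_i v`. Rescaling by
`e^{-tλ_j}` does not change the point of `ℙ(V)`, and the rescaled vector is
`P_j v + ∑_{i > j} e^{t(λ_i - λ_j)} P_i v → P_j v`, since the terms with `i < j` vanish and
`λ_i < λ_j` for `i > j`. -/

open Filter Topology

theorem ContinuousLinearMap.exp_apply_of_apply_eq_smul {𝕜 E : Type*} [RCLike 𝕜]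
    [NormedAddCommGroup E] [NormedSpace 𝕜 E] [CompleteSpace E] (A : E →L[𝕜] E) {c : 𝕜} {w : E}
    (h : A w = c • w) : NormedSpace.exp A w = NormedSpace.exp c • w := by
  have hpow : ∀ n : ℕ, (A ^ n) w = c ^ n • w := by
    intro n
    induction n with
    | zero => simp
    | succ n ih => rw [pow_succ', mul_apply_eq_comp, ih, map_smul, h, smul_smul, pow_succ]
  have hA := (NormedSpace.exp_series_hasSum_exp' (𝕂 := 𝕜) A).mapL (apply 𝕜 E w)
  have hc := (NormedSpace.exp_series_hasSum_exp' (𝕂 := 𝕜) c).smul_const w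
  refine hA.unique ?_
  simpa only [apply_apply, smul_apply, hpow, smul_smul, smul_eq_mul] using hc

theorem ContinuousLinearMap.exp_smul_apply_sum_of_apply_eq_smul {ι V : Type*} [Fintype ι]
    [NormedAddCommGroup V] [NormedSpace ℂ V] [CompleteSpace V] (β : V →L[ℂ] V) (lam : ι → ℝ)
    (x : ι → V) (hx : ∀ i, β (x i) = (lam i : ℂ) • x i) (t : ℝ) :
    NormedSpace.exp (t • β) (∑ i, x i) = ∑ i, Real.exp (t * lam i) • x i := by
  rw [map_sum]
  refine Finset.sum_congr rfl fun i _ => ?_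
  have htx : (t • β) (x i) = ((t * lam i : ℝ) : ℂ) • x i := by
    rw [smul_apply, hx, ← Complex.coe_smul, smul_smul, Complex.ofReal_mul]
  rw [exp_apply_of_apply_eq_smul _ htx, ← Complex.exp_eq_exp_ℂ, ← Complex.ofReal_exp,
    Complex.coe_smul]

theorem tendsto_exp_neg_mul_smul_sum_exp_mul_smul {ι E : Type*} [Fintype ι]
    [NormedAddCommGroup E] [NormedSpace ℝ E] (lam : ι → ℝ) (x : ι → E) (j : ι)
    (hdom : ∀ i ≠ j, x i ≠ 0 → lam i < lam j) :
    Tendsto (fun t : ℝ => Real.exp (-(t * lam j)) • ∑ i, Real.exp (t * lam i) • x i) atTop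
      (𝓝 (x j)) := by
  classical
  have hterm : ∀ i, Tendsto (fun t : ℝ => Real.exp (t * (lam i - lam j)) • x i) atTop
      (𝓝 (if i = j then x j else 0)) := by
    intro i
    by_cases hij : i = j
    · subst hij
      simp
    by_cases hxi : x i = 0
    · simp [hij, hxi]
    have hrate : Tendsto (fun t : ℝ => t * (lam i - lam j)) atTop atBot :=
      tendsto_id.atTop_mul_const_of_neg (sub_neg.mpr (hdom i hij hxi))
    simpa [hij] using (Real.tendsto_exp_atBot.comp hrate).smul_const (x i)
  convert tendsto_finsetSum Finset.univ fun i _ => hterm i using 1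
  · ext t
    rw [Finset.smul_sum]
    refine Finset.sum_congr rfl fun i _ => ?_
    rw [smul_smul, ← Real.exp_add]
    ring_nf
  · simp

theorem Projectivization.tendsto_mk_of_tendsto_smul {V α : Type*} [NormedAddCommGroup V]
    [InnerProductSpace ℂ V] {l : Filter α} {f : α → V} (hf : ∀ a, f a ≠ 0) {x : V} (hx : x ≠ 0)
    (c : α → ℝ) (hc : ∀ a, c a ≠ 0) (h : Tendsto (fun a => c a • f a) l (𝓝 x)) :
    Tendsto (fun a => mk ℂ (f a) (hf a)) l (𝓝 (mk ℂ x hx)) := by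
  have hcf : ∀ a, c a • f a ≠ 0 := fun a => smul_ne_zero (hc a) (hf a)
  have hmk : ∀ a, mk ℂ (c a • f a) (hcf a) = mk ℂ (f a) (hf a) := fun a =>
    (mk_eq_mk_iff' ℂ _ _ _ _).mpr ⟨c a, Complex.coe_smul _ _⟩
  simp_rw [← hmk]
  exact (continuous_quot_mk.tendsto _).comp (tendsto_subtype_rng.mpr h)

theorem stmt_11_general {V : Type*} [NormedAddCommGroup V] [InnerProductSpace ℂ V]
    [FiniteDimensional ℂ V] (β : V →L[ℂ] V)
    (k : ℕ) (lam : Fin k → ℝ) (hanti : StrictAnti lam)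
    (P : Fin k → (V →L[ℂ] V))
    (hP : ∀ i (w : V), P i w =
      (Submodule.orthogonalProjectionOnto
        (Module.End.eigenspace ((β : V →ₗ[ℂ] V) : Module.End ℂ V) (lam i : ℂ)) w : V))
    (hsum : ∑ i, P i = 1)
    (v : V) (hv : v ≠ 0) (j : Fin k) (hj : P j v ≠ 0) (hmin : ∀ i < j, P i v = 0) :
    Filter.Tendsto
      (fun t : ℝ => Projectivization.mk ℂ (NormedSpace.exp (t • β) v)
        (stmt11.exp_apply_ne_zero (t • β) v hv))
      Filter.atTop (nhds (Projectivization.mk ℂ (P j v) hj)) := by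
  have hdecomp : ∑ i, P i v = v := by
    simpa using congr($hsum v)
  have heig : ∀ i, β (P i v) = (lam i : ℂ) • P i v := fun i =>
    Module.End.mem_eigenspace_iff.mp (hP i v ▸ (Submodule.orthogonalProjectionOnto _ v).2)
  have hdom : ∀ i ≠ j, P i v ≠ 0 → lam i < lam j := fun i hij hi =>
    hanti ((lt_or_gt_of_ne hij).resolve_left fun hlt => hi (hmin i hlt))
  refine Projectivization.tendsto_mk_of_tendsto_smul _ hj (fun t => Real.exp (-(t * lam j)))
    (fun _ => Real.exp_ne_zero _) ?_
  have hexp (t : ℝ) : NormedSpace.exp (t • β) v = ∑ i, Real.exp (t * lam i) • P i v := by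
    rw [← β.exp_smul_apply_sum_of_apply_eq_smul lam _ heig, hdecomp]
  simp_rw [hexp]
  exact tendsto_exp_neg_mul_smul_sum_exp_mul_smul lam (fun i => P i v) j hdom

/-- Let `β` be a self-adjoint endomorphism of a finite-dimensional complex
inner product space `V` with distinct eigenvalues `λ₁ > ⋯ > λ_k`, eigenspaces `V₁, …, V_k`
and orthogonal projections `P_i` onto `V_i` (so that `∑ P_i = 1`).  Let `v ≠ 0` and let `j`
be the smallest index with `P_j v ≠ 0`.  Then in `ℙ(V)` one has
`lim_{t → +∞} [exp(tβ)v] = [P_j v]`. -/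
theorem stmt_11 {V : Type*} [NormedAddCommGroup V] [InnerProductSpace ℂ V]
    [FiniteDimensional ℂ V] (β : V →L[ℂ] V) (hβ : IsSelfAdjoint β)
    (k : ℕ) (lam : Fin k → ℝ) (hanti : StrictAnti lam)
    (P : Fin k → (V →L[ℂ] V))
    (hP : ∀ i (w : V), P i w =
      (Submodule.orthogonalProjectionOnto
        (Module.End.eigenspace ((β : V →ₗ[ℂ] V) : Module.End ℂ V) (lam i : ℂ)) w : V))
    (hsum : ∑ i, P i = 1)
    (v : V) (hv : v ≠ 0) (j : Fin k) (hj : P j v ≠ 0) (hmin : ∀ i < j, P i v = 0) :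
    Filter.Tendsto
      (fun t : ℝ => Projectivization.mk ℂ (NormedSpace.exp (t • β) v)
        (stmt11.exp_apply_ne_zero (t • β) v hv))
      Filter.atTop (nhds (Projectivization.mk ℂ (P j v) hj)) :=
  stmt_11_general β k lam hanti P hP hsum v hv j hj hmin
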